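/- Let D = (U,E) be an acyclic digraph on U ⊇ V such that N_V(D) is a full-dimensional subset of N(G), where G is a chain graph whose bidirected part contains a chordless cycle on nodes [p] = {1,…,p}, p ≥ 4, and A = an(C) the ancestors of the chain component C containing [p]. Then a proper directed path in D whose target lies in A cannot contain any edge of E_A(1,2). -/

import Mathlib

open Matrix BigOperators

def SupportedOn {V : Type} (E : V → V → Prop) (Λ : Matrix V V ℝ) : Prop :=
  ∀ u v, ¬ E u v → Λ u v = 0

def Acyclic {V : Type} (E : V → V → Prop) : Prop :=
  ∀ v, ¬ Relation.TransGen E v v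

def cycAdj (p : ℕ) (i j : Fin p) : Prop :=
  (i.1 + 1) % p = j.1 ∨ (j.1 + 1) % p = i.1

structure Trek {V : Type} (E : V → V → Prop) (u v : V) where
  left : List V
  right : List V
  left_ne : left ≠ []
  right_ne : right ≠ []
  top_eq : left.head left_ne = right.head right_ne
  chain_left : List.Chain' E left
  chain_right : List.Chain' E right
  last_left : left.getLast left_ne = u
  last_right : right.getLast right_ne = v

def Trek.top {V : Type} {E : V → V → Prop} {u v : V} (τ : Trek E u v) : V :=
  τ.left.head τ.left_ne

def edgeProd {V : Type} (Λ : Matrix V V ℝ) (l : List V) : ℝ :=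
  ((l.zip l.tail).map fun p => Λ p.1 p.2).prod

def Trek.mono {V : Type} {E : V → V → Prop} {u v : V} (Λ Ω : Matrix V V ℝ)
    (τ : Trek E u v) : ℝ :=
  Ω τ.top τ.top * edgeProd Λ τ.left * edgeProd Λ τ.right

structure TrekSystem {V : Type} (E : V → V → Prop) {n : ℕ} (x y : Fin n → V) where
  perm : Equiv.Perm (Fin n)
  trek : ∀ i, Trek E (x i) (y (perm i))

def TrekSystem.NoSided {V : Type} {E : V → V → Prop} {n : ℕ} {x y : Fin n → V}
    (S : TrekSystem E x y) : Prop :=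
  ∀ i j, i ≠ j →
    (∀ a : V, ¬(a ∈ (S.trek i).left ∧ a ∈ (S.trek j).left)) ∧
    (∀ a : V, ¬(a ∈ (S.trek i).right ∧ a ∈ (S.trek j).right))

structure DWalk {U : Type} (E : U → U → Prop) (u v : U) where
  steps : List (Bool × U × U)
  ne : steps ≠ []
  first_eq : (steps.head ne).2.1 = u
  last_eq : (steps.getLast ne).2.2 = v
  edge : ∀ s ∈ steps, (s.1 = true → E s.2.1 s.2.2) ∧ (s.1 = false → E s.2.2 s.2.1)
  chain : List.Chain' (fun s t : Bool × U × U => s.2.2 = t.2.1) steps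

def stepPairOK {U : Type} (A : Set U) (s t : Bool × U × U) : Prop :=
  ((s.1 = true ∧ t.1 = false) → s.2.2 ∈ A) ∧ (¬(s.1 = true ∧ t.1 = false) → s.2.2 ∉ A)

def DWalk.DConn {U : Type} {E : U → U → Prop} {u v : U} (A : Set U)
    (w : DWalk E u v) : Prop :=
  List.Chain' (stepPairOK A) w.steps

def topOf {U : Type} : List (Bool × U × U) → U → U
  | [], u => u
  | (d, a, _b) :: rest, _ => if d then a else topOf rest _b

def DWalk.top {U : Type} {E : U → U → Prop} {u v : U} (w : DWalk E u v) : U :=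
  topOf w.steps u

def TopsA {U : Type} (E : U → U → Prop) (A : Set U) (u v : U) : Set U :=
  {t | ∃ w : DWalk E u v, w.DConn A ∧ w.top = t}

def anAvoid {U : Type} (E : U → U → Prop) (A : Set U) (x : U) : Set U :=
  {u | u ∉ A ∧ Relation.ReflTransGen (fun a b => E a b ∧ a ∉ A ∧ b ∉ A) u x}

def EA {U : Type} (E : U → U → Prop) (A : Set U) (n1 n2 : U) : Set (U × U) :=
  {e | E e.1 e.2 ∧ e.1 ∈ TopsA E A n1 n2 ∧ e.2 ∈ anAvoid E A n1 ∧ e.2 ∉ TopsA E A n1 n2}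

def IsProperPath {U : Type} (E : U → U → Prop) (A : Set U) (l : List U) : Prop :=
  l ≠ [] ∧ List.Chain' (fun a b => E a b ∧ a ∉ A) l

def DigraphCov {U : Type} [Fintype U] [DecidableEq U] (E : U → U → Prop) :
    Set (Matrix U U ℝ) :=
  {S | ∃ Λ Ω : Matrix U U ℝ, SupportedOn E Λ ∧ Ω.IsDiag ∧ (∀ u, 0 < Ω u u) ∧
        S = ((1 - Λ)⁻¹)ᵀ * Ω * (1 - Λ)⁻¹}

def BSupported {V : Type} (B : SimpleGraph V) (Ω : Matrix V V ℝ) : Prop :=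
  ∀ u v, u ≠ v → ¬ B.Adj u v → Ω u v = 0

def MixedCov {V : Type} [Fintype V] [DecidableEq V] (D : V → V → Prop)
    (B : SimpleGraph V) : Set (Matrix V V ℝ) :=
  {S | ∃ Λ Ω : Matrix V V ℝ, SupportedOn D Λ ∧ Ω.PosDef ∧ BSupported B Ω ∧
        S = ((1 - Λ)⁻¹)ᵀ * Ω * (1 - Λ)⁻¹}

def StrictlyGaussianCausal {V : Type} [Fintype V] [DecidableEq V]
    (D : V → V → Prop) (B : SimpleGraph V) : Prop :=
  ∃ (U : Type) (iF : Fintype U) (iD : DecidableEq U) (ι : V ↪ U) (E : U → U → Prop),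
    Acyclic E ∧
      (fun S : Matrix U U ℝ => S.submatrix ι ι) '' (@DigraphCov U iF iD E) = MixedCov D B

def Chordal {V : Type} (B : SimpleGraph V) : Prop :=
  ∀ n : ℕ, 4 ≤ n → ∀ f : ZMod n → V, Function.Injective f →
    (∀ i, B.Adj (f i) (f (i + 1))) →
    ∃ i j : ZMod n, j ≠ i + 1 ∧ i ≠ j + 1 ∧ i ≠ j ∧ B.Adj (f i) (f j)

def ChainGraph {V : Type} (D : V → V → Prop) (B : SimpleGraph V) : Prop :=
  ¬ ∃ u v, D u v ∧ Relation.ReflTransGen (fun a b => D a b ∨ B.Adj a b) v u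

/-!
Let `u → v` be an edge of a proper directed path ending in `A`, where `u` is the top of a
d-connecting walk `ω` from `1` to `2` and `v ∈ an_{U∖A}(1)`. Then `v` is a top as well: walk
backwards from `1` to `v` along a directed path `v → ⋯ → 1` avoiding `A`, forwards along the proper
path from `v` to its endpoint `z ∈ A`, backwards from `z` to `v` and on to `u`, and finish with the
part of `ω` after its top `u`. The only collider of this walk is `z ∈ A`, and every other inner
node is the source of an edge of a proper path, hence outside `A`.
-/

theorem List.IsChain.forall_mem_dropLast {α : Type*} {p : α → Prop} :
    ∀ {l : List α}, (l.IsChain fun x _ => p x) → ∀ x ∈ l.dropLast, p x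
  | [], _ | [_], _ => by simp
  | a :: b :: l, h => by
    rw [List.dropLast_cons_cons, List.forall_mem_cons]
    exact ⟨(List.isChain_cons_cons.1 h).1, h.tail.forall_mem_dropLast⟩

theorem List.exists_eq_append_cons_cons_of_mem_zip_tail {α : Type*} {a b : α} :
    ∀ {l : List α}, (a, b) ∈ l.zip l.tail → ∃ l₁ l₂, l = l₁ ++ a :: b :: l₂
  | [], h | [_], h => by simp at h
  | x :: y :: l, h => by
    simp only [List.tail_cons, List.zip_cons_cons, List.mem_cons, Prod.mk.injEq] at h
    rcases h with ⟨rfl, rfl⟩ | h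
    · exact ⟨[], l, rfl⟩
    · obtain ⟨l₁, l₂, hl⟩ := exists_eq_append_cons_cons_of_mem_zip_tail (l := y :: l) h
      exact ⟨x :: l₁, l₂, by rw [hl, List.cons_append]⟩

section DConnSeg

variable {U : Type} {E : U → U → Prop} {A : Set U}

/-- The fields of a `DWalk` from `a` to `b` that is d-connecting given `A`, except that the step
list may be empty (then `a = b`). -/
structure IsDConnSeg (E : U → U → Prop) (A : Set U) (a b : U) (L : List (Bool × U × U)) :
    Prop where
  edge : ∀ s ∈ L, (s.1 = true → E s.2.1 s.2.2) ∧ (s.1 = false → E s.2.2 s.2.1)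
  chain : L.IsChain fun s t => s.2.2 = t.2.1
  dconn : L.IsChain (stepPairOK A)
  eq_of_nil : L = [] → a = b
  head_eq : ∀ h : L ≠ [], (L.head h).2.1 = a
  getLast_eq : ∀ h : L ≠ [], (L.getLast h).2.2 = b

namespace IsDConnSeg

variable {a b c : U} {s t : Bool × U × U} {L L₁ L₂ : List (Bool × U × U)}

theorem nil (a : U) : IsDConnSeg E A a a [] :=
  ⟨by simp, .nil, .nil, fun _ => rfl, fun h => absurd rfl h, fun h => absurd rfl h⟩

theorem singleton (hs : (s.1 = true → E s.2.1 s.2.2) ∧ (s.1 = false → E s.2.2 s.2.1)) :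
    IsDConnSeg E A s.2.1 s.2.2 [s] :=
  ⟨by simpa using hs, .singleton _, .singleton _, by simp, fun _ => rfl, fun _ => rfl⟩

theorem snd_fst_of_mem_head? (h : IsDConnSeg E A a b L) (ht : t ∈ L.head?) : t.2.1 = a :=
  List.head_of_mem_head? ht ▸ h.head_eq _

theorem snd_snd_of_mem_getLast? (h : IsDConnSeg E A a b L) (hs : s ∈ L.getLast?) : s.2.2 = b :=
  List.getLast_of_mem_getLast? hs ▸ h.getLast_eq _

theorem of_cons (h : IsDConnSeg E A a b (s :: L)) : IsDConnSeg E A s.2.2 b L := by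
  refine ⟨fun t ht => h.edge t (List.mem_cons_of_mem s ht), h.chain.tail, h.dconn.tail,
    fun hL => ?_, fun hL => ?_, fun hL => ?_⟩
  · subst hL
    exact h.getLast_eq (List.cons_ne_nil s [])
  · obtain ⟨t, L, rfl⟩ := List.exists_cons_of_ne_nil hL
    exact (List.isChain_cons_cons.1 h.chain).1.symm
  · simpa [List.getLast_cons hL] using h.getLast_eq (List.cons_ne_nil s L)

theorem append (h₁ : IsDConnSeg E A a b L₁) (h₂ : IsDConnSeg E A b c L₂)
    (hjoin : ∀ s ∈ L₁.getLast?, ∀ t ∈ L₂.head?, stepPairOK A s t) :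
    IsDConnSeg E A a c (L₁ ++ L₂) := by
  refine ⟨fun s hs => (List.mem_append.1 hs).elim (h₁.edge s) (h₂.edge s), ?_,
    List.isChain_append.2 ⟨h₁.dconn, h₂.dconn, hjoin⟩, fun hL => ?_, fun hL => ?_, fun hL => ?_⟩
  · refine List.isChain_append.2 ⟨h₁.chain, h₂.chain, fun s hs t ht => ?_⟩
    rw [h₁.snd_snd_of_mem_getLast? hs, h₂.snd_fst_of_mem_head? ht]
  · obtain ⟨rfl, rfl⟩ := List.append_eq_nil_iff.1 hL
    exact (h₁.eq_of_nil rfl).trans (h₂.eq_of_nil rfl)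
  · by_cases hL₁ : L₁ = []
    · subst hL₁
      simpa [h₁.eq_of_nil rfl] using h₂.head_eq hL
    · simpa [List.head_append_of_ne_nil hL₁] using h₁.head_eq hL₁
  · by_cases hL₂ : L₂ = []
    · subst hL₂
      simpa [← h₂.eq_of_nil rfl] using h₁.getLast_eq (by simpa using hL)
    · simpa [List.getLast_append_of_ne_nil _ hL₂] using h₂.getLast_eq hL₂

theorem append_of_not_mem (h₁ : IsDConnSeg E A a b L₁) (h₂ : IsDConnSeg E A b c L₂)
    (hb : b ∉ A) (hL₁ : ∀ s ∈ L₁, s.1 = false) : IsDConnSeg E A a c (L₁ ++ L₂) :=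
  h₁.append h₂ fun s hs _ _ => by
    simp [stepPairOK, hL₁ s (List.mem_of_mem_getLast? hs), h₁.snd_snd_of_mem_getLast? hs, hb]

theorem append_of_mem (h₁ : IsDConnSeg E A a b L₁) (h₂ : IsDConnSeg E A b c L₂)
    (hb : b ∈ A) (hL₁ : ∀ s ∈ L₁, s.1 = true) (hL₂ : ∀ t ∈ L₂.head?, t.1 = false) :
    IsDConnSeg E A a c (L₁ ++ L₂) :=
  h₁.append h₂ fun s hs t ht => by
    simp [stepPairOK, hL₁ s (List.mem_of_mem_getLast? hs), hL₂ t ht,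
      h₁.snd_snd_of_mem_getLast? hs, hb]

theorem exists_dWalk (h : IsDConnSeg E A a b L) (hL : L ≠ []) :
    ∃ w : DWalk E a b, w.DConn A ∧ w.steps = L :=
  ⟨⟨L, hL, h.head_eq hL, h.getLast_eq hL, h.edge, h.chain⟩, h.dconn, rfl⟩

theorem exists_isDConnSeg_topOf (h : IsDConnSeg E A a b L) :
    ∃ L', IsDConnSeg E A (topOf L a) b L' := by
  induction L generalizing a with
  | nil => exact ⟨[], h.eq_of_nil rfl ▸ nil a⟩
  | cons s L ih =>
    obtain ⟨_ | _, x, y⟩ := s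
    · exact ih h.of_cons
    · exact ⟨_, (h.head_eq (List.cons_ne_nil _ _)).symm ▸ h⟩

end IsDConnSeg

theorem DWalk.exists_isDConnSeg_top {a b : U} (w : DWalk E a b) (hw : w.DConn A) :
    ∃ L, IsDConnSeg E A w.top b L :=
  IsDConnSeg.exists_isDConnSeg_topOf
    ⟨w.edge, w.chain, hw, fun h => absurd h w.ne, fun _ => w.first_eq, fun _ => w.last_eq⟩

def runSteps (d : Bool) : List U → List (Bool × U × U)
  | a :: b :: l => (d, a, b) :: runSteps d (b :: l)
  | _ => []

theorem fst_of_mem_runSteps {d : Bool} :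
    ∀ {q : List U} {s : Bool × U × U}, s ∈ runSteps d q → s.1 = d
  | [], _, hs | [_], _, hs => by simp [runSteps] at hs
  | a :: b :: l, s, hs => by
    rcases List.mem_cons.1 hs with rfl | hs
    · rfl
    · exact fst_of_mem_runSteps hs

theorem isDConnSeg_runSteps (d : Bool) :
    ∀ (q : List U) (hne : q ≠ []), q.IsChain (fun x y => cond d (E x y) (E y x)) →
      (∀ y ∈ q.tail.dropLast, y ∉ A) →
      IsDConnSeg E A (q.head hne) (q.getLast hne) (runSteps d q)
  | [], hne, _, _ => absurd rfl hne
  | [a], _, _, _ => IsDConnSeg.nil a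
  | a :: b :: l, _, hq, hint => by
    have hab : IsDConnSeg E A a b [(d, a, b)] := IsDConnSeg.singleton (s := (d, a, b)) <| by
      cases d <;> simpa using (List.isChain_cons_cons.1 hq).1
    have hbl := isDConnSeg_runSteps d (b :: l) (List.cons_ne_nil _ _) hq.tail
      fun y hy => hint y (List.mem_of_mem_tail (by simpa [List.tail_dropLast] using hy))
    simpa [runSteps] using hab.append hbl fun s hs t ht => by
      obtain rfl : s = (d, a, b) := by simpa [eq_comm] using hs
      obtain ⟨c, l, rfl⟩ : ∃ c l', l = c :: l' :=
        List.exists_cons_of_ne_nil (by rintro rfl; simp [runSteps] at ht)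
      simp [stepPairOK, fst_of_mem_runSteps (List.mem_of_mem_head? ht), hint b (by simp)]

theorem runSteps_ne_nil (d : Bool) : ∀ {q : List U}, 1 < q.length → runSteps d q ≠ []
  | _ :: _ :: _, _ => List.cons_ne_nil _ _

theorem isDConnSeg_runSteps_true {q : List U} (hq : IsProperPath E A q) :
    IsDConnSeg E A (q.head hq.1) (q.getLast hq.1) (runSteps true q) :=
  isDConnSeg_runSteps true q hq.1 (hq.2.imp fun _ _ h => h.1) fun y hy =>
    (hq.2.imp fun _ _ h => h.2).forall_mem_dropLast y
      (List.mem_of_mem_tail (List.tail_dropLast ▸ hy))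

theorem isDConnSeg_runSteps_false_reverse {q : List U} (hq : IsProperPath E A q) :
    IsDConnSeg E A (q.getLast hq.1) (q.head hq.1) (runSteps false q.reverse) := by
  have h := isDConnSeg_runSteps false q.reverse (by simpa using hq.1)
    (List.isChain_reverse.2 (hq.2.imp fun _ _ h => h.1)) fun y hy =>
      (hq.2.imp fun _ _ h => h.2).forall_mem_dropLast y (List.mem_of_mem_tail
        (by simpa [List.tail_reverse, List.dropLast_reverse, List.tail_dropLast] using hy))
  rwa [List.head_reverse, List.getLast_reverse] at h

theorem topOf_append_cons_true {L₁ : List (Bool × U × U)} (a c d : U) (L₂ : List (Bool × U × U))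
    (h : ∀ s ∈ L₁, s.1 = false) : topOf (L₁ ++ (true, c, d) :: L₂) a = c := by
  induction L₁ generalizing a with
  | nil => simp [topOf]
  | cons s L₁ ih =>
    obtain ⟨_, x, y⟩ := s
    obtain rfl := h _ List.mem_cons_self
    exact ih y fun s hs => h s (List.mem_cons_of_mem _ hs)

theorem mem_topsA_of_isProperPath {n₁ n₂ u v : U} {t : List U}
    (hu : u ∈ TopsA E A n₁ n₂) (hv : v ∈ anAvoid E A n₁)
    (hpath : IsProperPath E A (u :: v :: t))
    (htarget : (v :: t).getLast (List.cons_ne_nil v t) ∈ A) : v ∈ TopsA E A n₁ n₂ := by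
  obtain ⟨w, hw, rfl⟩ := hu
  obtain ⟨hvA, hvn₁⟩ := hv
  obtain ⟨y, t, rfl⟩ : ∃ y t', t = y :: t' := by
    cases t with
    | nil => exact absurd htarget hvA
    | cons y t => exact ⟨y, t, rfl⟩
  obtain ⟨suf, hsuf⟩ := w.exists_isDConnSeg_top hw
  obtain ⟨r, hr, hr_last⟩ := List.exists_isChain_cons_of_relationReflTransGen hvn₁
  have hto_v : IsDConnSeg E A n₁ v (runSteps false (v :: r).reverse) := by
    simpa [hr_last] using isDConnSeg_runSteps_false_reverse
      ⟨List.cons_ne_nil v r, hr.imp fun _ _ h => ⟨h.1, h.2.1⟩⟩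
  have hto_z : IsDConnSeg E A v ((v :: y :: t).getLast (List.cons_ne_nil _ _))
      (runSteps true (v :: y :: t)) :=
    isDConnSeg_runSteps_true ⟨List.cons_ne_nil _ _, hpath.2.tail⟩
  have hto_u : IsDConnSeg E A ((v :: y :: t).getLast (List.cons_ne_nil _ _)) w.top
      (runSteps false (w.top :: v :: y :: t).reverse) := by
    simpa using isDConnSeg_runSteps_false_reverse hpath
  have hto_u_ne : runSteps false (w.top :: v :: y :: t).reverse ≠ [] :=
    runSteps_ne_nil false (by simp)
  have hfrom_z := hto_u.append_of_not_mem hsuf (List.isChain_cons_cons.1 hpath.2).1.2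
    fun _ => fst_of_mem_runSteps
  have hfrom_v := hto_z.append_of_mem hfrom_z htarget (fun _ => fst_of_mem_runSteps) fun s hs =>
    fst_of_mem_runSteps (List.mem_of_mem_head? (List.head?_append_of_ne_nil _ hto_u_ne ▸ hs))
  have hwalk := hto_v.append_of_not_mem hfrom_v hvA fun _ => fst_of_mem_runSteps
  obtain ⟨w', hw', hsteps⟩ := hwalk.exists_dWalk (by simp [runSteps])
  refine ⟨w', hw', ?_⟩
  rw [DWalk.top, hsteps]
  exact topOf_append_cons_true _ _ _ _ fun _ => fst_of_mem_runSteps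

end DConnSeg

theorem stmt11 {U : Type} (E : U → U → Prop) (A : Set U)
    {p : ℕ} (hp : 4 ≤ p) (cyc : Fin p ↪ U)
    (l : List U) (hne : l ≠ []) (hl : IsProperPath E A l)
    (htarget : l.getLast hne ∈ A) :
    ∀ e ∈ l.zip l.tail, e ∉ EA E A (cyc ⟨0, by omega⟩) (cyc ⟨1, by omega⟩) := by
  rintro ⟨u, v⟩ he ⟨-, hu, hv, hv_not⟩
  obtain ⟨l₁, t, rfl⟩ := List.exists_eq_append_cons_cons_of_mem_zip_tail he
  refine hv_not (mem_topsA_of_isProperPath hu hv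
    ⟨List.cons_ne_nil _ _, hl.2.suffix (List.suffix_append _ _)⟩ ?_)
  simpa using htarget
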